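/- Let T = {0,1}, m, n ≥ 1 and L = {H^{p(t)}_t, V^{q(t)}_t : t ∈ T} with p(t), q(t) ≥ 2 for all t. The local-surgery algorithm (repeatedly: find a violating cell of minimal weight, flip its tile if that resolves it without new violation at that cell, otherwise perform the 3-cell surgery setting f(i,j) = f(i-1,j-1) and f(i-1,j) = f(i,j-1) = 1 - f(i-1,j-1)) terminates in finitely many steps and outputs an L-dappled tiling. Moreover, if the input tiling is already L-dappled, the output equals the input. -/

import Mathlib

def vioH (f : ℕ → ℕ → Fin 2) (p : ℕ) (t : Fin 2) (i j : ℕ) : Prop :=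
  p ≤ i ∧ ∀ s ≤ p, f (i - s) j = t

def vioV (f : ℕ → ℕ → Fin 2) (q : ℕ) (t : Fin 2) (i j : ℕ) : Prop :=
  q ≤ j ∧ ∀ s ≤ q, f i (j - s) = t

def vioAny (p q : Fin 2 → ℕ) (f : ℕ → ℕ → Fin 2) (i j : ℕ) : Prop :=
  ∃ t : Fin 2, vioH f (p t) t i j ∨ vioV f (q t) t i j

def Dappled (m n : ℕ) (p q : Fin 2 → ℕ) (f : ℕ → ℕ → Fin 2) : Prop :=
  ∀ i < m, ∀ j < n, ¬ vioAny p q f i j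

def upd (f : ℕ → ℕ → Fin 2) (a b : ℕ) (v : Fin 2) : ℕ → ℕ → Fin 2 :=
  fun i j => if i = a ∧ j = b then v else f i j

/-- The 3-cell surgery at `(i,j)`:
`f(i,j) ← f(i-1,j-1)`, `f(i-1,j) ← 1 - f(i-1,j-1)`, `f(i,j-1) ← 1 - f(i-1,j-1)`. -/
def surgery3 (f : ℕ → ℕ → Fin 2) (i j : ℕ) : ℕ → ℕ → Fin 2 :=
  upd (upd (upd f i j (f (i-1) (j-1))) (i-1) j (1 - f (i-1) (j-1))) i (j-1)
    (1 - f (i-1) (j-1))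

/-- One step of the local-surgery algorithm: at a violating cell of minimal
weight, flip the tile if that resolves the violation at that cell, otherwise
perform the 3-cell surgery. -/
def step (m n : ℕ) (p q : Fin 2 → ℕ) (f g : ℕ → ℕ → Fin 2) : Prop :=
  ∃ i j, i < m ∧ j < n ∧ vioAny p q f i j ∧
    (∀ i' j', i' < m → j' < n → i' + j' < i + j → ¬ vioAny p q f i' j') ∧
    ((¬ vioAny p q (upd f i j (1 - f i j)) i j ∧ g = upd f i j (1 - f i j)) ∨
     (vioAny p q (upd f i j (1 - f i j)) i j ∧ g = surgery3 f i j))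

/-!
A step at a lightest violating cell `(i, j)` removes that violation and creates none of weight
at most `i + j`. A flip changes only `(i, j)`. If the flip fails, `(i, j)` has a horizontal
violation of one colour and a vertical one of the other, so `f (i-1) j = f (i-2) j` and
`f i (j-1) = f i (j-2)`; after the surgery, a row or column segment ending at a cell of weight at
most `i + j` and meeting a changed cell either contains both `c = f (i-1) (j-1)` and `1 - c`, or
was already a violation of `f`. Hence the numbers of violations of weights `0, 1, …, m + n - 1`,
compared lexicographically, decrease at every step: the algorithm terminates, and it stops only
at dappled tilings.
-/

open Finset Function

theorem Relation.exists_reflTransGen_of_wellFounded {α : Type*} {r : α → α → Prop}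
    {P : α → Prop} (hwf : WellFounded (flip r)) (hstep : ∀ x, ¬ P x → ∃ y, r x y) (x : α) :
    ∃ y, ReflTransGen r x y ∧ P y := by
  induction x using hwf.induction with
  | _ x ih =>
    by_cases hx : P x
    · exact ⟨x, .refl, hx⟩
    obtain ⟨y, hxy⟩ := hstep x hx
    obtain ⟨z, hyz, hz⟩ := ih y hxy
    exact ⟨z, .head hxy hyz, hz⟩

lemma Fin.one_sub_ne_self : ∀ x : Fin 2, 1 - x ≠ x := by decide

lemma upd_self (f : ℕ → ℕ → Fin 2) (a b : ℕ) (v : Fin 2) : upd f a b v a b = v :=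
  if_pos ⟨rfl, rfl⟩

lemma upd_of_ne {f : ℕ → ℕ → Fin 2} {a b x y : ℕ} {v : Fin 2} (h : ¬(x = a ∧ y = b)) :
    upd f a b v x y = f x y :=
  if_neg h

section Surgery

variable (f : ℕ → ℕ → Fin 2) (i j : ℕ)

lemma surgery3_apply_self (hi : 1 ≤ i) (hj : 1 ≤ j) :
    surgery3 f i j i j = f (i - 1) (j - 1) := by
  rw [surgery3, upd_of_ne (by omega), upd_of_ne (by omega), upd_self]

lemma surgery3_apply_left (hi : 1 ≤ i) : surgery3 f i j (i - 1) j = 1 - f (i - 1) (j - 1) := by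
  rw [surgery3, upd_of_ne (by omega), upd_self]

lemma surgery3_apply_below : surgery3 f i j i (j - 1) = 1 - f (i - 1) (j - 1) :=
  upd_self ..

variable {f i j} in
lemma surgery3_apply_of_ne {x y : ℕ} (h₁ : ¬(x = i ∧ y = j)) (h₂ : ¬(x = i - 1 ∧ y = j))
    (h₃ : ¬(x = i ∧ y = j - 1)) : surgery3 f i j x y = f x y := by
  rw [surgery3, upd_of_ne h₃, upd_of_ne h₂, upd_of_ne h₁]

lemma swap_surgery3 : swap (surgery3 f i j) = surgery3 (swap f) j i := by
  funext x y
  simp only [swap, surgery3, upd]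
  split_ifs <;> first | rfl | omega

end Surgery

section Violations

variable {f g : ℕ → ℕ → Fin 2} {p : ℕ} {t : Fin 2} {a b : ℕ}

lemma vioV_iff_vioH_swap : vioV f p t a b ↔ vioH (swap f) p t b a := Iff.rfl

lemma vioH.head_three (h : vioH f p t a b) (hp : 2 ≤ p) :
    2 ≤ a ∧ f a b = t ∧ f (a - 1) b = t ∧ f (a - 2) b = t :=
  ⟨hp.trans h.1, h.2 0 (Nat.zero_le _), h.2 1 (by omega), h.2 2 hp⟩

lemma vioV.head_three (h : vioV f p t a b) (hp : 2 ≤ p) :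
    2 ≤ b ∧ f a b = t ∧ f a (b - 1) = t ∧ f a (b - 2) = t :=
  vioH.head_three (f := swap f) h hp

lemma vioH.apply_of_le {x : ℕ} (h : vioH f p t a b) (hxa : x ≤ a) (hx : a ≤ x + p) :
    f x b = t := by
  simpa [Nat.sub_sub_self hxa] using h.2 (a - x) (by omega)

lemma vioH.of_agree (h : vioH g p t a b) (hfg : ∀ s ≤ p, g (a - s) b = f (a - s) b) :
    vioH f p t a b :=
  ⟨h.1, fun s hs => hfg s hs ▸ h.2 s hs⟩

lemma vioV.of_agree (h : vioV g p t a b) (hfg : ∀ s ≤ p, g a (b - s) = f a (b - s)) :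
    vioV f p t a b :=
  ⟨h.1, fun s hs => hfg s hs ▸ h.2 s hs⟩

end Violations

def RepairsAt (p q : Fin 2 → ℕ) (f g : ℕ → ℕ → Fin 2) (i j : ℕ) : Prop :=
  ∀ a b, a + b ≤ i + j → vioAny p q g a b → vioAny p q f a b ∧ (a, b) ≠ (i, j)

lemma repairsAt_upd {p q : Fin 2 → ℕ} {f : ℕ → ℕ → Fin 2} {i j : ℕ} {v : Fin 2}
    (hfix : ¬ vioAny p q (upd f i j v) i j) : RepairsAt p q f (upd f i j v) i j := by
  intro a b hab hg
  have hne : ¬(a = i ∧ b = j) := by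
    rintro ⟨rfl, rfl⟩
    exact hfix hg
  obtain ⟨t, hH | hV⟩ := hg
  · exact ⟨⟨t, .inl (hH.of_agree fun s _ => upd_of_ne (by omega))⟩, by simpa using hne⟩
  · exact ⟨⟨t, .inr (hV.of_agree fun s _ => upd_of_ne (by omega))⟩, by simpa using hne⟩

lemma vioH_surgery3 {f : ℕ → ℕ → Fin 2} {i j a b p : ℕ} {t : Fin 2} (hp : 2 ≤ p)
    (hj : 1 ≤ j) (hrow : f (i - 1) j = f (i - 2) j) (hab : a + b ≤ i + j)
    (h : vioH (surgery3 f i j) p t a b) : vioH f p t a b ∧ (a, b) ≠ (i, j) := by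
  have hpa : p ≤ a := h.1
  have hsplit : 1 - f (i - 1) (j - 1) ≠ f (i - 1) (j - 1) := Fin.one_sub_ne_self _
  by_cases hself : a = i ∧ b = j
  · obtain ⟨rfl, rfl⟩ := hself
    have h₀ : surgery3 f a b a b = t := h.apply_of_le le_rfl (by omega)
    have h₁ : surgery3 f a b (a - 1) b = t := h.apply_of_le (by omega) (by omega)
    rw [surgery3_apply_self f a b (by omega) hj] at h₀
    rw [surgery3_apply_left f a b (by omega)] at h₁
    exact absurd (h₁.trans h₀.symm) hsplit
  by_cases hbelow : b = j - 1 ∧ (a = i ∨ a = i + 1)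
  · obtain ⟨rfl, ha⟩ := hbelow
    have h₀ : surgery3 f i j i (j - 1) = t := h.apply_of_le (by omega) (by omega)
    have h₁ : surgery3 f i j (i - 1) (j - 1) = t := h.apply_of_le (by omega) (by omega)
    rw [surgery3_apply_below] at h₀
    rw [surgery3_apply_of_ne (by omega) (by omega) (by omega)] at h₁
    exact absurd (h₀.trans h₁.symm) hsplit
  refine ⟨⟨hpa, fun s hs => ?_⟩, by simpa using hself⟩
  by_cases hleft : a = i - 1 ∧ b = j ∧ s = 0
  · obtain ⟨rfl, rfl, rfl⟩ := hleft
    have h₂ : surgery3 f i b (i - 2) b = t := h.apply_of_le (by omega) (by omega)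
    rw [surgery3_apply_of_ne (by omega) (by omega) (by omega)] at h₂
    rw [Nat.sub_zero, hrow, h₂]
  · have hfar : surgery3 f i j (a - s) b = f (a - s) b :=
      surgery3_apply_of_ne (by omega) (by omega) (by omega)
    exact hfar ▸ h.2 s hs

lemma vioV_surgery3 {f : ℕ → ℕ → Fin 2} {i j a b q : ℕ} {t : Fin 2} (hq : 2 ≤ q)
    (hi : 1 ≤ i) (hcol : f i (j - 1) = f i (j - 2)) (hab : a + b ≤ i + j)
    (h : vioV (surgery3 f i j) q t a b) : vioV f q t a b ∧ (a, b) ≠ (i, j) := by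
  rw [vioV_iff_vioH_swap, swap_surgery3] at h
  obtain ⟨hH, hne⟩ := vioH_surgery3 hq hi hcol (by omega) h
  exact ⟨hH, fun heq => hne (by rw [Prod.mk.injEq] at heq ⊢; exact heq.symm)⟩

lemma repairsAt_surgery3 {p q : Fin 2 → ℕ} {f : ℕ → ℕ → Fin 2} {i j : ℕ}
    (hp : ∀ t, 2 ≤ p t) (hq : ∀ t, 2 ≤ q t) (hi : 1 ≤ i) (hj : 1 ≤ j)
    (hrow : f (i - 1) j = f (i - 2) j) (hcol : f i (j - 1) = f i (j - 2)) :
    RepairsAt p q f (surgery3 f i j) i j := by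
  rintro a b hab ⟨t, hH | hV⟩
  · obtain ⟨h, hne⟩ := vioH_surgery3 (hp t) hj hrow hab hH
    exact ⟨⟨t, .inl h⟩, hne⟩
  · obtain ⟨h, hne⟩ := vioV_surgery3 (hq t) hi hcol hab hV
    exact ⟨⟨t, .inr h⟩, hne⟩

lemma surgery_conditions_of_vioAny_flip {p q : Fin 2 → ℕ} {f : ℕ → ℕ → Fin 2} {i j : ℕ}
    (hp : ∀ t, 2 ≤ p t) (hq : ∀ t, 2 ≤ q t) (hf : vioAny p q f i j)
    (hflip : vioAny p q (upd f i j (1 - f i j)) i j) :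
    2 ≤ i ∧ 2 ≤ j ∧ f (i - 1) j = f (i - 2) j ∧ f i (j - 1) = f i (j - 2) := by
  have hne : 1 - f i j ≠ f i j := Fin.one_sub_ne_self _
  obtain ⟨t, hH | hV⟩ := hf <;> obtain ⟨t', hH' | hV'⟩ := hflip
  · obtain ⟨hi, h₀, h₁, -⟩ := hH.head_three (hp t)
    obtain ⟨-, h₀', h₁', -⟩ := hH'.head_three (hp t')
    rw [upd_self] at h₀'
    rw [upd_of_ne (by omega)] at h₁'
    exact absurd (by rw [h₀', ← h₁', h₁, h₀]) hne
  · obtain ⟨hi, -, h₁, h₂⟩ := hH.head_three (hp t)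
    obtain ⟨hj, -, h₁', h₂'⟩ := hV'.head_three (hq t')
    rw [upd_of_ne (by omega)] at h₁' h₂'
    exact ⟨hi, hj, h₁.trans h₂.symm, h₁'.trans h₂'.symm⟩
  · obtain ⟨hj, -, h₁, h₂⟩ := hV.head_three (hq t)
    obtain ⟨hi, -, h₁', h₂'⟩ := hH'.head_three (hp t')
    rw [upd_of_ne (by omega)] at h₁' h₂'
    exact ⟨hi, hj, h₁'.trans h₂'.symm, h₁.trans h₂.symm⟩
  · obtain ⟨hj, h₀, h₁, -⟩ := hV.head_three (hq t)
    obtain ⟨-, h₀', h₁', -⟩ := hV'.head_three (hq t')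
    rw [upd_self] at h₀'
    rw [upd_of_ne (by omega)] at h₁'
    exact absurd (by rw [h₀', ← h₁', h₁, h₀]) hne

section Profile

variable (m n : ℕ) (p q : Fin 2 → ℕ)

open Classical in
noncomputable def violationsOfWeight (f : ℕ → ℕ → Fin 2) (w : ℕ) : Finset (ℕ × ℕ) :=
  {x ∈ range m ×ˢ range n | x.1 + x.2 = w ∧ vioAny p q f x.1 x.2}

noncomputable def violationProfile (f : ℕ → ℕ → Fin 2) : Lex (Fin (m + n) → ℕ) :=
  toLex fun w => #(violationsOfWeight m n p q f w)

variable {m n p q}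

lemma mem_violationsOfWeight {f : ℕ → ℕ → Fin 2} {w : ℕ} {x : ℕ × ℕ} :
    x ∈ violationsOfWeight m n p q f w ↔
      x.1 < m ∧ x.2 < n ∧ x.1 + x.2 = w ∧ vioAny p q f x.1 x.2 := by
  simp [violationsOfWeight, and_assoc]

lemma violationProfile_lt {f g : ℕ → ℕ → Fin 2} {i j : ℕ} (hi : i < m) (hj : j < n)
    (hv : vioAny p q f i j)
    (hmin : ∀ a b, a < m → b < n → a + b < i + j → ¬ vioAny p q f a b)
    (hrep : RepairsAt p q f g i j) :
    violationProfile m n p q g < violationProfile m n p q f := by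
  have hsub : ∀ w ≤ i + j,
      violationsOfWeight m n p q g w ⊆ (violationsOfWeight m n p q f w).erase (i, j) := by
    intro w hw x hx
    rw [mem_violationsOfWeight] at hx
    obtain ⟨hf, hne⟩ := hrep x.1 x.2 (by omega) hx.2.2.2
    simpa [mem_violationsOfWeight, hx, hf] using hne
  have hempty : ∀ w < i + j, violationsOfWeight m n p q f w = ∅ := by
    intro w hw
    ext x
    simp only [mem_violationsOfWeight, notMem_empty, iff_false]
    exact fun ⟨ha, hb, hab, hx⟩ => hmin x.1 x.2 ha hb (by omega) hx
  refine ⟨⟨i + j, by omega⟩, fun w hw => ?_, ?_⟩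
  · have hw : (w : ℕ) < i + j := hw
    have hg : violationsOfWeight m n p q g w = ∅ := by
      simpa [hempty w hw] using hsub w hw.le
    change #(violationsOfWeight m n p q g w) = #(violationsOfWeight m n p q f w)
    rw [hg, hempty w hw]
  · change #(violationsOfWeight m n p q g (i + j)) < #(violationsOfWeight m n p q f (i + j))
    refine (card_le_card (hsub _ le_rfl)).trans_lt (card_erase_lt_of_mem ?_)
    exact mem_violationsOfWeight.mpr ⟨hi, hj, rfl, hv⟩

end Profile

section Algorithm

variable {m n : ℕ} {p q : Fin 2 → ℕ}

lemma violationProfile_lt_of_step (hp : ∀ t, 2 ≤ p t) (hq : ∀ t, 2 ≤ q t)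
    {f g : ℕ → ℕ → Fin 2} (h : step m n p q f g) :
    violationProfile m n p q g < violationProfile m n p q f := by
  obtain ⟨i, j, hi, hj, hv, hmin, ⟨hfix, rfl⟩ | ⟨hflip, rfl⟩⟩ := h
  · exact violationProfile_lt hi hj hv hmin (repairsAt_upd hfix)
  · obtain ⟨hi₂, hj₂, hrow, hcol⟩ := surgery_conditions_of_vioAny_flip hp hq hv hflip
    exact violationProfile_lt hi hj hv hmin
      (repairsAt_surgery3 hp hq (by omega) (by omega) hrow hcol)

lemma wellFounded_flip_step (hp : ∀ t, 2 ≤ p t) (hq : ∀ t, 2 ≤ q t) :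
    WellFounded (flip (step m n p q)) :=
  Subrelation.wf (violationProfile_lt_of_step hp hq) (InvImage.wf _ wellFounded_lt)

lemma exists_step_of_not_dappled {f : ℕ → ℕ → Fin 2} (hf : ¬ Dappled m n p q f) :
    ∃ g, step m n p q f g := by
  have hne : {x : ℕ × ℕ | x.1 < m ∧ x.2 < n ∧ vioAny p q f x.1 x.2}.Nonempty := by
    simp only [Dappled, not_forall, not_not] at hf
    obtain ⟨i, hi, j, hj, hv⟩ := hf
    exact ⟨(i, j), hi, hj, hv⟩
  obtain ⟨⟨i, j⟩, ⟨hi, hj, hv⟩, hmin⟩ :=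
    (measure fun x : ℕ × ℕ => x.1 + x.2).wf.has_min _ hne
  have hmin' : ∀ a b, a < m → b < n → a + b < i + j → ¬ vioAny p q f a b :=
    fun a b ha hb hab hv' => hmin (a, b) ⟨ha, hb, hv'⟩ hab
  by_cases hflip : vioAny p q (upd f i j (1 - f i j)) i j
  · exact ⟨_, i, j, hi, hj, hv, hmin', .inr ⟨hflip, rfl⟩⟩
  · exact ⟨_, i, j, hi, hj, hv, hmin', .inl ⟨hflip, rfl⟩⟩

end Algorithm

theorem stmt7_general (m n : ℕ) (p q : Fin 2 → ℕ)
    (hp : ∀ t, 2 ≤ p t) (hq : ∀ t, 2 ≤ q t) (f : ℕ → ℕ → Fin 2) :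
    ∃ g : ℕ → ℕ → Fin 2,
      Relation.ReflTransGen (step m n p q) f g ∧
      Dappled m n p q g ∧
      (Dappled m n p q f → g = f) := by
  by_cases hf : Dappled m n p q f
  · exact ⟨f, .refl, hf, fun _ => rfl⟩
  obtain ⟨g, hfg, hg⟩ := Relation.exists_reflTransGen_of_wellFounded
    (wellFounded_flip_step hp hq) (fun _ => exists_step_of_not_dappled) f
  exact ⟨g, hfg, hg, fun h => absurd h hf⟩

/-- The local-surgery algorithm terminates in finitely many steps and outputs
an `L`-dappled tiling; if the input is already `L`-dappled the output is the
input. -/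
theorem stmt7 (m n : ℕ) (hm : 1 ≤ m) (hn : 1 ≤ n) (p q : Fin 2 → ℕ)
    (hp : ∀ t, 2 ≤ p t) (hq : ∀ t, 2 ≤ q t) (f : ℕ → ℕ → Fin 2) :
    ∃ g : ℕ → ℕ → Fin 2,
      Relation.ReflTransGen (step m n p q) f g ∧
      Dappled m n p q g ∧
      (Dappled m n p q f → g = f) :=
  stmt7_general m n p q hp hq f
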